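/- Let D < 0 with D ≡ 0 or 1 mod 4, let A be an SL₂(ℤ)-equivalence class of integral binary quadratic forms of discriminant D, and let k ≥ 2. Then f_{k,D,A}(z) = π^{-k} Σ_{[a,b,c]∈A, a>0} (az²+bz+c)^{−k} converges absolutely on ℍ minus the CM points of A and satisfies f_{k,D,A}((pz+q)/(rz+s)) = (rz+s)^{2k} f_{k,D,A}(z) for all (p q; r s) ∈ SL₂(ℤ). -/

import Mathlib

open Complex Real Filter Topology BigOperators

noncomputable section

/-- The upper half-plane, as a subset of `ℂ`. -/
def UHP : Set ℂ := {z : ℂ | 0 < z.im}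

/-- `z` is a CM point of discriminant `D`: a root in the upper half-plane of an
integral quadratic `a X² + b X + c` with `a > 0` and `b² - 4ac = D`. -/
def IsCM (D : ℤ) (z : ℂ) : Prop :=
  0 < z.im ∧ ∃ a b c : ℤ, 0 < a ∧ b ^ 2 - 4 * a * c = D ∧ (a : ℂ) * z ^ 2 + b * z + c = 0

/-- Integral binary quadratic forms `(a, b, c)` of discriminant `D` with `a > 0`. -/
def QF (D : ℤ) : Set (ℤ × ℤ × ℤ) :=
  {Q | 0 < Q.1 ∧ Q.2.1 ^ 2 - 4 * Q.1 * Q.2.2 = D}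

/-- The quadratic polynomial `a z² + b z + c` attached to `Q = (a, b, c)`. -/
def qpoly (Q : ℤ × ℤ × ℤ) (z : ℂ) : ℂ := (Q.1 : ℂ) * z ^ 2 + (Q.2.1 : ℂ) * z + (Q.2.2 : ℂ)

/-- The series `f_{k,D}(z) = π⁻ᵏ Σ_{b²-4ac=D, a>0} (a z² + b z + c)⁻ᵏ`. -/
def fkD (k : ℕ) (D : ℤ) (z : ℂ) : ℂ :=
  (π : ℂ) ^ (-(k : ℤ)) * ∑' Q : QF D, qpoly Q.1 z ^ (-(k : ℤ))

/-- The Möbius action of `γ ∈ SL₂(ℤ)` on `ℂ`. -/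
def mob (γ : Matrix.SpecialLinearGroup (Fin 2) ℤ) (z : ℂ) : ℂ :=
  ((γ.1 0 0 : ℂ) * z + (γ.1 0 1 : ℂ)) / ((γ.1 1 0 : ℂ) * z + (γ.1 1 1 : ℂ))

/-- The action of `γ = (p q; r s) ∈ SL₂(ℤ)` on binary quadratic forms by change of
variables `Q'(x, y) = Q(p x + q y, r x + s y)`. -/
def actQF (γ : Matrix.SpecialLinearGroup (Fin 2) ℤ) (Q : ℤ × ℤ × ℤ) : ℤ × ℤ × ℤ :=
  (Q.1 * (γ.1 0 0) ^ 2 + Q.2.1 * (γ.1 0 0) * (γ.1 1 0) + Q.2.2 * (γ.1 1 0) ^ 2,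
   2 * Q.1 * (γ.1 0 0) * (γ.1 0 1) + Q.2.1 * ((γ.1 0 0) * (γ.1 1 1) + (γ.1 0 1) * (γ.1 1 0))
     + 2 * Q.2.2 * (γ.1 1 0) * (γ.1 1 1),
   Q.1 * (γ.1 0 1) ^ 2 + Q.2.1 * (γ.1 0 1) * (γ.1 1 1) + Q.2.2 * (γ.1 1 1) ^ 2)

/-- The series `f_{k,D,A}(z) = π⁻ᵏ Σ_{[a,b,c] ∈ A, a>0} (a z² + b z + c)⁻ᵏ`. -/
def fkDA (k : ℕ) (A : Set (ℤ × ℤ × ℤ)) (z : ℂ) : ℂ :=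
  (π : ℂ) ^ (-(k : ℤ)) * ∑' Q : {Q : ℤ × ℤ × ℤ // Q ∈ A ∧ 0 < Q.1}, qpoly Q.1 z ^ (-(k : ℤ))

/-- `z` is a CM point of the class `A`. -/
def IsCMA (A : Set (ℤ × ℤ × ℤ)) (z : ℂ) : Prop :=
  0 < z.im ∧ ∃ Q ∈ A, 0 < Q.1 ∧ qpoly Q z = 0

/-!
Write `Q₀ = a (X - ω) (X - ω̄)` with `ω` the CM point of `Q₀`. For `γ = (p q; r s)` one has
`(Q₀ ∘ γ)(z) = Q₀(γ z) (r z + s)²`, hence `|(Q₀ ∘ γ)(z)| ≥ a (Im ω) |γ z - ω| |r z + s|²`.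
The orbit of `z` is discrete and, `z` not being a CM point of the class, avoids `ω`; so
`|γ z - ω|` is bounded below, and therefore comparable to `|m - ω|`, where `m` is the integer
nearest to `Re (γ z)`. Elements of `SL₂(ℤ)` with the same bottom row differ by a translation
`T ^ n`, so `γ` is determined by `(r, s)` and `m`, and the series is dominated by the product of
the Eisenstein series `∑ |r z + s|^(-2k)` and `∑ₘ |m - ω|^(-k)`. The transformation law is the
reindexing `Q ↦ Q ∘ γ` of the class.
-/

open scoped MatrixGroups

section BinaryForms

theorem actQF_mul (γ γ' : SL(2, ℤ)) (Q : ℤ × ℤ × ℤ) :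
    actQF γ' (actQF γ Q) = actQF (γ * γ') Q := by
  simp only [actQF, Matrix.SpecialLinearGroup.coe_mul, Matrix.mul_apply, Fin.sum_univ_two]
  refine Prod.ext ?_ (Prod.ext ?_ ?_) <;> ring

theorem actQF_one (Q : ℤ × ℤ × ℤ) : actQF 1 Q = Q := by
  simp [actQF]

theorem det_fin_two_eq_one (γ : SL(2, ℤ)) : γ.1 0 0 * γ.1 1 1 - γ.1 0 1 * γ.1 1 0 = 1 := by
  rw [← Matrix.det_fin_two, γ.det_coe]

theorem disc_actQF (γ : SL(2, ℤ)) (Q : ℤ × ℤ × ℤ) :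
    (actQF γ Q).2.1 ^ 2 - 4 * (actQF γ Q).1 * (actQF γ Q).2.2
      = Q.2.1 ^ 2 - 4 * Q.1 * Q.2.2 := by
  have hdet := det_fin_two_eq_one γ
  simp only [actQF]
  linear_combination (Q.2.1 ^ 2 - 4 * Q.1 * Q.2.2) *
    (γ.1 0 0 * γ.1 1 1 - γ.1 0 1 * γ.1 1 0 + 1) * hdet

theorem form_pos_of_disc_neg {a b c : ℤ} (ha : 0 < a) (hdisc : b ^ 2 - 4 * a * c < 0)
    {x y : ℤ} (hxy : x ≠ 0 ∨ y ≠ 0) : 0 < a * x ^ 2 + b * x * y + c * y ^ 2 := by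
  have key : 4 * a * (a * x ^ 2 + b * x * y + c * y ^ 2)
      = (2 * a * x + b * y) ^ 2 - (b ^ 2 - 4 * a * c) * y ^ 2 := by ring
  have hpos : 0 < (2 * a * x + b * y) ^ 2 - (b ^ 2 - 4 * a * c) * y ^ 2 := by
    rcases eq_or_ne y 0 with rfl | hy
    · have hx : x ≠ 0 := by simpa using hxy
      simp only [mul_zero, add_zero, ne_eq, OfNat.ofNat_ne_zero, not_false_eq_true, zero_pow,
        sub_zero]
      positivity
    · nlinarith [sq_nonneg (2 * a * x + b * y), pow_pos (sq_pos_of_ne_zero hy) 1]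
  exact pos_of_mul_pos_right (key ▸ hpos) (by positivity)

theorem actQF_fst_pos {D : ℤ} (hD : D < 0) {Q : ℤ × ℤ × ℤ} (hQ : Q ∈ QF D) (γ : SL(2, ℤ)) :
    0 < (actQF γ Q).1 := by
  have hcol : γ.1 0 0 ≠ 0 ∨ γ.1 1 0 ≠ 0 := by
    by_contra! h
    simpa [h.1, h.2] using det_fin_two_eq_one γ
  exact form_pos_of_disc_neg hQ.1 (hQ.2 ▸ hD) hcol

theorem actQF_mem_QF {D : ℤ} (hD : D < 0) {Q : ℤ × ℤ × ℤ} (hQ : Q ∈ QF D) (γ : SL(2, ℤ)) :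
    actQF γ Q ∈ QF D :=
  ⟨actQF_fst_pos hD hQ γ, (disc_actQF γ Q).trans hQ.2⟩

end BinaryForms

section Mobius

variable {z : ℂ}

theorem mob_denom_ne_zero (γ : SL(2, ℤ)) (hz : 0 < z.im) :
    (γ.1 1 0 : ℂ) * z + γ.1 1 1 ≠ 0 := by
  have hrow : ((↑) ∘ γ.1 1 : Fin 2 → ℝ) ≠ 0 := fun h ↦ by
    have h0 := congrFun h 0
    have h1 := congrFun h 1
    simp only [Function.comp_apply, Pi.zero_apply, Int.cast_eq_zero] at h0 h1
    simpa [h0, h1] using det_fin_two_eq_one γ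
  simpa using UpperHalfPlane.linear_ne_zero_of_im hz.ne' hrow

theorem im_mob (γ : SL(2, ℤ)) (z : ℂ) :
    (mob γ z).im = z.im / Complex.normSq ((γ.1 1 0 : ℂ) * z + γ.1 1 1) := by
  have hdet : (γ.1 0 0 : ℝ) * γ.1 1 1 - γ.1 0 1 * γ.1 1 0 = 1 := by
    exact_mod_cast det_fin_two_eq_one γ
  rw [mob, Complex.div_im, div_sub_div_same]
  congr 1
  simp only [Complex.add_im, Complex.add_re, Complex.mul_im, Complex.mul_re,
    Complex.intCast_re, Complex.intCast_im]
  linear_combination z.im * hdet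

theorem im_mob_pos (γ : SL(2, ℤ)) (hz : 0 < z.im) : 0 < (mob γ z).im := by
  rw [im_mob]
  exact div_pos hz (Complex.normSq_pos.mpr (mob_denom_ne_zero γ hz))

theorem qpoly_mob (γ : SL(2, ℤ)) (Q : ℤ × ℤ × ℤ) (hz : 0 < z.im) :
    qpoly Q (mob γ z) = qpoly (actQF γ Q) z / ((γ.1 1 0 : ℂ) * z + γ.1 1 1) ^ 2 := by
  have hβ := mob_denom_ne_zero γ hz
  simp only [qpoly, mob, actQF]
  push_cast
  set β := (γ.1 1 0 : ℂ) * z + γ.1 1 1 with hβdef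
  field_simp
  rw [hβdef]
  ring

end Mobius

section CMPoint

open ComplexConjugate

def cmPoint (D : ℤ) (Q : ℤ × ℤ × ℤ) : ℂ := (-Q.2.1 + √(-D : ℝ) * I) / (2 * Q.1)

variable {D : ℤ} {Q : ℤ × ℤ × ℤ}

theorem im_cmPoint : (cmPoint D Q).im = √(-D : ℝ) / (2 * Q.1) := by
  rw [cmPoint, show (2 * (Q.1 : ℂ)) = ((2 * Q.1 : ℝ) : ℂ) by push_cast; rfl,
    Complex.div_ofReal_im]
  simp

theorem im_cmPoint_pos (hD : D < 0) (hQ : 0 < Q.1) : 0 < (cmPoint D Q).im := by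
  have : (0 : ℝ) < -D := by exact_mod_cast neg_pos.mpr hD
  rw [im_cmPoint]
  positivity

theorem qpoly_eq_mul_sub_cmPoint (hD : D < 0) (hQ : Q ∈ QF D) (w : ℂ) :
    qpoly Q w = Q.1 * (w - cmPoint D Q) * (w - conj (cmPoint D Q)) := by
  have ha : (Q.1 : ℂ) ≠ 0 := by exact_mod_cast hQ.1.ne'
  have hsqrt : ((√(-D : ℝ) : ℝ) : ℂ) ^ 2 = -D := by
    rw [← Complex.ofReal_pow, Real.sq_sqrt (by exact_mod_cast (neg_pos.mpr hD).le)]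
    push_cast; rfl
  have hdisc : (Q.2.1 : ℂ) ^ 2 - 4 * Q.1 * Q.2.2 = D := by exact_mod_cast hQ.2
  have hconj : conj (cmPoint D Q) = (-Q.2.1 - √(-D : ℝ) * I) / (2 * Q.1) := by
    simp [cmPoint, map_div₀, map_ofNat, sub_eq_add_neg]
  rw [hconj, cmPoint, qpoly]
  field_simp
  linear_combination -hdisc + ((√(-D : ℝ) : ℝ) : ℂ) ^ 2 * Complex.I_sq - hsqrt

theorem qpoly_cmPoint (hD : D < 0) (hQ : Q ∈ QF D) : qpoly Q (cmPoint D Q) = 0 := by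
  simp [qpoly_eq_mul_sub_cmPoint hD hQ]

theorem norm_qpoly_ge (hD : D < 0) (hQ : Q ∈ QF D) {w : ℂ} (hw : 0 ≤ w.im) :
    Q.1 * (cmPoint D Q).im * ‖w - cmPoint D Q‖ ≤ ‖qpoly Q w‖ := by
  have hconj : (cmPoint D Q).im ≤ ‖w - conj (cmPoint D Q)‖ := by
    refine le_trans ?_ (Complex.abs_im_le_norm _)
    rw [Complex.sub_im, Complex.conj_im]
    exact le_abs.mpr (Or.inl (by linarith))
  have ha : (0 : ℝ) < Q.1 := by exact_mod_cast hQ.1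
  rw [qpoly_eq_mul_sub_cmPoint hD hQ, norm_mul, norm_mul, Complex.norm_intCast,
    abs_of_pos ha]
  calc (Q.1 : ℝ) * (cmPoint D Q).im * ‖w - cmPoint D Q‖
      = Q.1 * ‖w - cmPoint D Q‖ * (cmPoint D Q).im := by ring
    _ ≤ Q.1 * ‖w - cmPoint D Q‖ * ‖w - conj (cmPoint D Q)‖ := by gcongr

end CMPoint

section BottomRow

variable {z : ℂ}

theorem row_zero_eq_add_of_row_one_eq {γ γ' : SL(2, ℤ)} (h : γ'.1 1 = γ.1 1) :
    γ'.1 0 = γ.1 0 + (γ.1 0 0 * γ'.1 0 1 - γ'.1 0 0 * γ.1 0 1) • γ.1 1 := by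
  have hdet := det_fin_two_eq_one γ
  have hdet' := det_fin_two_eq_one γ'
  rw [congrFun h 0, congrFun h 1] at hdet'
  funext j
  fin_cases j
  · simp only [Fin.zero_eta, Pi.add_apply, Pi.smul_apply, smul_eq_mul]
    linear_combination (-γ'.1 0 0) * hdet + γ.1 0 0 * hdet'
  · simp only [Fin.mk_one, Pi.add_apply, Pi.smul_apply, smul_eq_mul]
    linear_combination (-γ'.1 0 1) * hdet + γ.1 0 1 * hdet'

theorem mob_eq_add_of_rows_eq {γ γ' : SL(2, ℤ)} {n : ℤ} (h1 : γ'.1 1 = γ.1 1)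
    (h0 : γ'.1 0 = γ.1 0 + n • γ.1 1) (hz : 0 < z.im) : mob γ' z = mob γ z + n := by
  have hβ := mob_denom_ne_zero γ hz
  simp only [mob, congrFun h1 0, congrFun h1 1, congrFun h0 0, congrFun h0 1, Pi.add_apply,
    Pi.smul_apply, smul_eq_mul]
  push_cast
  field_simp
  ring

def orbitIndex (z : ℂ) (γ : SL(2, ℤ)) : (Fin 2 → ℤ) × ℤ := (γ.1 1, round (mob γ z).re)

theorem orbitIndex_injective (hz : 0 < z.im) : Function.Injective (orbitIndex z) := by
  intro γ' γ h
  have h1 : γ'.1 1 = γ.1 1 := congrArg Prod.fst h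
  obtain ⟨n, h0⟩ : ∃ n : ℤ, γ'.1 0 = γ.1 0 + n • γ.1 1 :=
    ⟨_, row_zero_eq_add_of_row_one_eq h1⟩
  have hround : round (mob γ' z).re = round (mob γ z).re := congrArg Prod.snd h
  rw [mob_eq_add_of_rows_eq h1 h0 hz, Complex.add_re, Complex.intCast_re,
    round_add_intCast] at hround
  have hn : n = 0 := by omega
  rw [hn, zero_smul, add_zero] at h0
  ext i j
  fin_cases i
  · exact congrFun h0 j
  · exact congrFun h1 j

end BottomRow

section Discreteness

theorem exists_pos_forall_le_of_finite {α : Type*} {f : α → ℝ} (hf : ∀ a, 0 < f a) {ε : ℝ}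
    (hε : 0 < ε) (hfin : {a | f a ≤ ε}.Finite) : ∃ δ > 0, ∀ a, δ ≤ f a := by
  by_cases hne : {a | f a ≤ ε}.Nonempty
  · obtain ⟨a₀, -, ha₀⟩ := Set.exists_min_image _ f hfin hne
    refine ⟨min ε (f a₀), lt_min hε (hf a₀), fun a ↦ ?_⟩
    by_cases ha : f a ≤ ε
    · exact (min_le_right _ _).trans (ha₀ a ha)
    · exact (min_le_left _ _).trans (le_of_not_ge ha)
  · exact ⟨ε, hε, fun a ↦ le_of_not_ge fun ha ↦ hne ⟨a, ha⟩⟩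

variable {z : ℂ}

theorem finite_setOf_normSq_le (hz : 0 < z.im) (C : ℝ) :
    {v : Fin 2 → ℤ | Complex.normSq (v 0 * z + v 1) ≤ C}.Finite := by
  have h := (ModularGroup.tendsto_normSq_coprime_pair ⟨z, hz⟩).eventually_gt_atTop C
  simpa only [Filter.eventually_cofinite, not_lt] using h

theorem finite_setOf_norm_mob_sub_le (hz : 0 < z.im) {w : ℂ} (hw : 0 < w.im) :
    {γ : SL(2, ℤ) | ‖mob γ z - w‖ ≤ w.im / 2}.Finite := by
  refine ((finite_setOf_normSq_le hz (2 * z.im / w.im)).prod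
    (Set.finite_Icc ⌈w.re - (w.im + 1) / 2⌉ ⌊w.re + (w.im + 1) / 2⌋)).preimage
    (orbitIndex_injective hz).injOn |>.subset fun γ hγ ↦ ?_
  have him : w.im / 2 ≤ (mob γ z).im := by
    have := (abs_le.mp ((Complex.abs_im_le_norm _).trans hγ)).1
    rw [Complex.sub_im] at this
    linarith
  have hre : |(mob γ z).re - w.re| ≤ w.im / 2 := by
    simpa using (Complex.abs_re_le_norm _).trans hγ
  have hround := abs_sub_round (mob γ z).re
  refine ⟨?_, Int.ceil_le.mpr ?_, Int.le_floor.mpr ?_⟩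
  · have hβ := Complex.normSq_pos.mpr (mob_denom_ne_zero γ hz)
    rw [im_mob, le_div_iff₀ hβ] at him
    show Complex.normSq ((γ.1 1 0 : ℂ) * z + γ.1 1 1) ≤ 2 * z.im / w.im
    rw [le_div_iff₀ hw]
    linarith
  · show w.re - (w.im + 1) / 2 ≤ ((round (mob γ z).re : ℤ) : ℝ)
    linarith [abs_le.mp hre, abs_le.mp hround]
  · show ((round (mob γ z).re : ℤ) : ℝ) ≤ w.re + (w.im + 1) / 2
    linarith [abs_le.mp hre, abs_le.mp hround]

theorem exists_pos_forall_le_norm_mob_sub (hz : 0 < z.im) {w : ℂ} (hw : 0 < w.im)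
    (hne : ∀ γ : SL(2, ℤ), mob γ z ≠ w) : ∃ δ > 0, ∀ γ : SL(2, ℤ), δ ≤ ‖mob γ z - w‖ :=
  exists_pos_forall_le_of_finite (fun γ ↦ norm_pos_iff.mpr (sub_ne_zero.mpr (hne γ)))
    (half_pos hw) (finite_setOf_norm_mob_sub_le hz hw)

end Discreteness

section Summability

theorem summable_inv_norm_linear_pow {z : ℂ} (hz : 0 < z.im) {k : ℕ} (hk : 3 ≤ k) :
    Summable fun v : Fin 2 → ℤ ↦ (‖(v 0 : ℂ) * z + v 1‖ ^ k)⁻¹ := by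
  refine (EisensteinSeries.summable_norm_eisSummand (k := k) (by omega) ⟨z, hz⟩).congr
    fun v ↦ ?_
  simp [EisensteinSeries.eisSummand]

theorem summable_inv_norm_intCast_sub_pow (w : ℂ) {k : ℕ} (hk : 2 ≤ k) :
    Summable fun m : ℤ ↦ (‖(m : ℂ) - w‖ ^ k)⁻¹ := by
  refine (summable_norm_iff.mpr
    (EisensteinSeries.linear_right_summable (-w) 1 (k := k) (by omega))).congr fun m ↦ ?_
  simp [neg_add_eq_sub]

theorem norm_round_re_sub_le {w w₀ : ℂ} {δ : ℝ} (hδ : 0 < δ) (h : δ ≤ ‖w - w₀‖) :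
    δ * ‖(round w.re : ℂ) - w₀‖ ≤ (δ + 1 / 2 + |w₀.im|) * ‖w - w₀‖ := by
  have hround := abs_sub_round w.re
  have hre := Complex.abs_re_le_norm (w - w₀)
  have hm : ‖(round w.re : ℂ) - w₀‖ ≤ ‖w - w₀‖ + 1 / 2 + |w₀.im| := by
    refine (Complex.norm_le_abs_re_add_abs_im _).trans ?_
    simp only [Complex.sub_re, Complex.sub_im, Complex.intCast_re, Complex.intCast_im,
      zero_sub, abs_neg] at hre ⊢
    linarith [abs_sub_le (round w.re : ℝ) w.re w₀.re, abs_sub_comm w.re (round w.re : ℝ)]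
  nlinarith [abs_nonneg w₀.im]

variable {D : ℤ} (hD : D < 0) {Q₀ : ℤ × ℤ × ℤ} (hQ₀ : Q₀ ∈ QF D) {z : ℂ} (hz : 0 < z.im)
include hD hQ₀ hz

theorem norm_qpoly_actQF_ge {δ : ℝ} (hδ : 0 < δ) {γ : SL(2, ℤ)}
    (hγ : δ ≤ ‖mob γ z - cmPoint D Q₀‖) :
    Q₀.1 * (cmPoint D Q₀).im * δ / (δ + 1 / 2 + (cmPoint D Q₀).im) *
        (‖(round (mob γ z).re : ℂ) - cmPoint D Q₀‖ * ‖(γ.1 1 0 : ℂ) * z + γ.1 1 1‖ ^ 2)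
      ≤ ‖qpoly (actQF γ Q₀) z‖ := by
  set w₀ := cmPoint D Q₀
  have hy₀ : 0 < w₀.im := im_cmPoint_pos hD hQ₀.1
  have ha : (0 : ℝ) < Q₀.1 := by exact_mod_cast hQ₀.1
  have hround := norm_round_re_sub_le hδ hγ
  rw [abs_of_pos hy₀] at hround
  have hlow := norm_qpoly_ge hD hQ₀ (im_mob_pos γ hz).le
  have hq : ‖qpoly (actQF γ Q₀) z‖
      = ‖qpoly Q₀ (mob γ z)‖ * ‖(γ.1 1 0 : ℂ) * z + γ.1 1 1‖ ^ 2 := by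
    rw [qpoly_mob γ Q₀ hz, norm_div, norm_pow,
      div_mul_cancel₀ _ (pow_ne_zero 2 (norm_ne_zero_iff.mpr (mob_denom_ne_zero γ hz)))]
  rw [hq, ← mul_assoc]
  gcongr
  rw [div_mul_eq_mul_div, div_le_iff₀ (by positivity)]
  calc Q₀.1 * w₀.im * δ * ‖(round (mob γ z).re : ℂ) - w₀‖
      = Q₀.1 * w₀.im * (δ * ‖(round (mob γ z).re : ℂ) - w₀‖) := by ring
    _ ≤ Q₀.1 * w₀.im * ((δ + 1 / 2 + w₀.im) * ‖mob γ z - w₀‖) := by gcongr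
    _ ≤ ‖qpoly Q₀ (mob γ z)‖ * (δ + 1 / 2 + w₀.im) := by nlinarith

theorem summable_norm_qpoly_actQF_zpow {k : ℕ} (hk : 2 ≤ k)
    (hne : ∀ γ : SL(2, ℤ), mob γ z ≠ cmPoint D Q₀) :
    Summable fun γ : SL(2, ℤ) ↦ ‖qpoly (actQF γ Q₀) z ^ (-(k : ℤ))‖ := by
  set w₀ := cmPoint D Q₀
  have hy₀ : 0 < w₀.im := im_cmPoint_pos hD hQ₀.1
  have ha : (0 : ℝ) < Q₀.1 := by exact_mod_cast hQ₀.1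
  obtain ⟨δ, hδ, hδle⟩ := exists_pos_forall_le_norm_mob_sub hz hy₀ hne
  set c := Q₀.1 * w₀.im * δ / (δ + 1 / 2 + w₀.im)
  have hc : 0 < c := by positivity
  have hG : Summable fun p : (Fin 2 → ℤ) × ℤ ↦
      (‖(p.1 0 : ℂ) * z + p.1 1‖ ^ (2 * k))⁻¹ * (‖(p.2 : ℂ) - w₀‖ ^ k)⁻¹ :=
    (summable_inv_norm_linear_pow hz (by omega)).mul_of_nonneg
      (summable_inv_norm_intCast_sub_pow w₀ hk) (fun _ ↦ by positivity) fun _ ↦ by positivity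
  refine ((hG.mul_left (c ^ k)⁻¹).comp_injective (orbitIndex_injective hz)).of_nonneg_of_le
    (fun _ ↦ norm_nonneg _) fun γ ↦ ?_
  have hm : 0 < ‖(round (mob γ z).re : ℂ) - w₀‖ := by
    refine norm_pos_iff.mpr fun h ↦ hy₀.ne' ?_
    simpa using congrArg Complex.im h
  have hβ : 0 < ‖(γ.1 1 0 : ℂ) * z + γ.1 1 1‖ := norm_pos_iff.mpr (mob_denom_ne_zero γ hz)
  calc ‖qpoly (actQF γ Q₀) z ^ (-(k : ℤ))‖
      = (‖qpoly (actQF γ Q₀) z‖ ^ k)⁻¹ := by rw [norm_zpow, zpow_neg, zpow_natCast]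
    _ ≤ ((c * (‖(round (mob γ z).re : ℂ) - w₀‖ * ‖(γ.1 1 0 : ℂ) * z + γ.1 1 1‖ ^ 2)) ^ k)⁻¹ :=
        inv_anti₀ (by positivity)
          (pow_le_pow_left₀ (by positivity) (norm_qpoly_actQF_ge hD hQ₀ hz hδ (hδle γ)) k)
    _ = _ := by
        simp only [Function.comp_apply, orbitIndex]
        rw [mul_pow, mul_pow, ← pow_mul, mul_inv, mul_inv]
        ring

end Summability

section Orbit

def orbitQF (Q₀ : ℤ × ℤ × ℤ) : Set (ℤ × ℤ × ℤ) := {Q | ∃ γ : SL(2, ℤ), Q = actQF γ Q₀}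

variable {D : ℤ} (hD : D < 0) {Q₀ : ℤ × ℤ × ℤ} (hQ₀ : Q₀ ∈ QF D)
include hD hQ₀

theorem actQF_mem_orbitQF_and_pos {Q : ℤ × ℤ × ℤ} (hQ : Q ∈ orbitQF Q₀) (γ : SL(2, ℤ)) :
    actQF γ Q ∈ orbitQF Q₀ ∧ 0 < (actQF γ Q).1 := by
  obtain ⟨g, rfl⟩ := hQ
  exact ⟨⟨g * γ, actQF_mul g γ Q₀⟩, actQF_fst_pos hD (actQF_mem_QF hD hQ₀ g) γ⟩

def actQFEquiv (γ : SL(2, ℤ)) :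
    {Q // Q ∈ orbitQF Q₀ ∧ 0 < Q.1} ≃ {Q // Q ∈ orbitQF Q₀ ∧ 0 < Q.1} where
  toFun Q := ⟨actQF γ Q, actQF_mem_orbitQF_and_pos hD hQ₀ Q.2.1 γ⟩
  invFun Q := ⟨actQF γ⁻¹ Q, actQF_mem_orbitQF_and_pos hD hQ₀ Q.2.1 γ⁻¹⟩
  left_inv Q := Subtype.ext <| by simp only [actQF_mul, mul_inv_cancel, actQF_one]
  right_inv Q := Subtype.ext <| by simp only [actQF_mul, inv_mul_cancel, actQF_one]

theorem fkDA_mob (k : ℕ) (γ : SL(2, ℤ)) {z : ℂ} (hz : 0 < z.im) :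
    fkDA k (orbitQF Q₀) (mob γ z)
      = ((γ.1 1 0 : ℂ) * z + γ.1 1 1) ^ (2 * k) * fkDA k (orbitQF Q₀) z := by
  have hterm : ∀ Q : {Q // Q ∈ orbitQF Q₀ ∧ 0 < Q.1}, qpoly Q.1 (mob γ z) ^ (-(k : ℤ))
      = ((γ.1 1 0 : ℂ) * z + γ.1 1 1) ^ (2 * k)
        * qpoly (actQFEquiv hD hQ₀ γ Q).1 z ^ (-(k : ℤ)) := fun Q ↦ by
    rw [qpoly_mob γ Q.1 hz, zpow_neg, zpow_natCast, zpow_neg, zpow_natCast, div_pow,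
      ← pow_mul, inv_div, div_eq_mul_inv]
    rfl
  rw [fkDA, fkDA, tsum_congr hterm, tsum_mul_left,
    (actQFEquiv hD hQ₀ γ).tsum_eq fun Q ↦ qpoly Q.1 z ^ (-(k : ℤ))]
  ring

theorem mob_ne_cmPoint_of_not_isCMA {z : ℂ} (hz : 0 < z.im) (hcm : ¬ IsCMA (orbitQF Q₀) z)
    (γ : SL(2, ℤ)) : mob γ z ≠ cmPoint D Q₀ := fun h ↦ by
  have hroot := qpoly_mob γ Q₀ hz
  rw [h, qpoly_cmPoint hD hQ₀, eq_comm, div_eq_zero_iff] at hroot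
  exact hcm ⟨hz, actQF γ Q₀, ⟨γ, rfl⟩, actQF_fst_pos hD hQ₀ γ,
    hroot.resolve_right (pow_ne_zero 2 (mob_denom_ne_zero γ hz))⟩

theorem summable_norm_qpoly_orbitQF_zpow {k : ℕ} (hk : 2 ≤ k) {z : ℂ} (hz : 0 < z.im)
    (hcm : ¬ IsCMA (orbitQF Q₀) z) :
    Summable fun Q : {Q // Q ∈ orbitQF Q₀ ∧ 0 < Q.1} ↦ ‖qpoly Q.1 z ^ (-(k : ℤ))‖ := by
  let φ : SL(2, ℤ) → {Q // Q ∈ orbitQF Q₀ ∧ 0 < Q.1} :=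
    fun γ ↦ ⟨actQF γ Q₀, ⟨γ, rfl⟩, actQF_fst_pos hD hQ₀ γ⟩
  have hφ : φ.Surjective := fun Q ↦ by
    obtain ⟨γ, hγ⟩ := Q.2.1
    exact ⟨γ, Subtype.ext hγ.symm⟩
  have hsum := summable_norm_qpoly_actQF_zpow hD hQ₀ hz hk
    (mob_ne_cmPoint_of_not_isCMA hD hQ₀ hz hcm)
  refine (hsum.comp_injective (Function.injective_surjInv hφ)).congr fun Q ↦ ?_
  simp only [Function.comp_apply]
  rw [← congrArg Subtype.val (Function.surjInv_eq hφ Q)]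

end Orbit

theorem stmt3_general (k : ℕ) (hk : 2 ≤ k) (D : ℤ) (hD : D < 0)
    (A : Set (ℤ × ℤ × ℤ))
    (hA : ∃ Q₀ ∈ QF D, A = {Q | ∃ γ : Matrix.SpecialLinearGroup (Fin 2) ℤ, Q = actQF γ Q₀}) :
    (∀ z : ℂ, 0 < z.im → ¬ IsCMA A z →
      Summable (fun Q : {Q : ℤ × ℤ × ℤ // Q ∈ A ∧ 0 < Q.1} => ‖qpoly Q.1 z ^ (-(k : ℤ))‖)) ∧
    (∀ γ : Matrix.SpecialLinearGroup (Fin 2) ℤ, ∀ z : ℂ, 0 < z.im → ¬ IsCMA A z →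
      fkDA k A (mob γ z)
        = ((γ.1 1 0 : ℂ) * z + (γ.1 1 1 : ℂ)) ^ (2 * k) * fkDA k A z) := by
  obtain ⟨Q₀, hQ₀, rfl⟩ := hA
  exact ⟨fun z hz hcm ↦ summable_norm_qpoly_orbitQF_zpow hD hQ₀ hk hz hcm,
    fun γ z hz _ ↦ fkDA_mob hD hQ₀ k γ hz⟩

/-- For an `SL₂(ℤ)`-equivalence class `A` of integral binary quadratic
forms of discriminant `D < 0`, the series `f_{k,D,A}` converges absolutely away from the
CM points of `A` and transforms modularly of weight `2k`. -/
theorem stmt3 (k : ℕ) (hk : 2 ≤ k) (D : ℤ) (hD : D < 0)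
    (hDcong : D % 4 = 0 ∨ D % 4 = 1)
    (A : Set (ℤ × ℤ × ℤ))
    (hA : ∃ Q₀ ∈ QF D, A = {Q | ∃ γ : Matrix.SpecialLinearGroup (Fin 2) ℤ, Q = actQF γ Q₀}) :
    (∀ z : ℂ, 0 < z.im → ¬ IsCMA A z →
      Summable (fun Q : {Q : ℤ × ℤ × ℤ // Q ∈ A ∧ 0 < Q.1} => ‖qpoly Q.1 z ^ (-(k : ℤ))‖)) ∧
    (∀ γ : Matrix.SpecialLinearGroup (Fin 2) ℤ, ∀ z : ℂ, 0 < z.im → ¬ IsCMA A z →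
      fkDA k A (mob γ z)
        = ((γ.1 1 0 : ℂ) * z + (γ.1 1 1 : ℂ)) ^ (2 * k) * fkDA k A z) :=
  stmt3_general k hk D hD A hA
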